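/- arXiv:0801.4368 — 3 statements merged into one kernel-verified Lean document; each statement's English description precedes it below -/
import Mathlib

section
/- For any family X of subsets of ℕ that is closed under arithmetic definability (in particular, closed under the map A ↦ {⌜A ∩ n⌝ : n ∈ ℕ} using a Gödel coding of finite sets), the poset X/Fin (infinite sets in X ordered by almost inclusion) has an antichain of cardinality |X|. Consequently, every arithmetically closed family of reals whose quotient X/Fin satisfies the countable chain condition is countable. -/
/-!
Since the coding is injective, a code `⌜A ∩ n⌝` determines `A ∩ n`. If `k ∈ A \ B`, then
`A ∩ n = B ∩ m` forces `n ≤ k`, so `A'` and `B'` share at most `k + 1` elements. Hence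
`A ↦ A'` is an injection of `X` into an almost-disjoint subfamily of `X`, and it sends
infinite sets to infinite sets. Under the c.c.c. the infinite members of `X` are therefore
countably many, and so are the finite subsets of `ℕ`.
-/

open Set

open Classical in
/-- The finite set `A ∩ {0, 1, ..., n-1}` (as a `Finset`). -/
noncomputable def initSeg (A : Set ℕ) (n : ℕ) : Finset ℕ :=
  (Finset.range n).filter (fun m => m ∈ A)

/-- `A' = {⌜A ∩ n⌝ : n ∈ ℕ}`, the set of codes of initial segments of `A`. -/
noncomputable def primeSet (e : Finset ℕ → ℕ) (A : Set ℕ) : Set ℕ :=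
  Set.range (fun n => e (initSeg A n))

theorem Set.Countable.of_countable_setOf_infinite {α : Type*} [Countable α] {X : Set (Set α)}
    (h : {A ∈ X | A.Infinite}.Countable) : X.Countable := by
  refine (Set.Countable.ofPred_finite.union h).mono fun A hA => ?_
  by_cases hfin : A.Finite
  exacts [Or.inl hfin, Or.inr ⟨hA, hfin⟩]

lemma mem_initSeg {A : Set ℕ} {n m : ℕ} : m ∈ initSeg A n ↔ m < n ∧ m ∈ A := by
  classical
  simp [initSeg]

lemma mem_of_initSeg_eq {A B : Set ℕ} {n m k : ℕ} (h : initSeg A n = initSeg B m)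
    (hkn : k < n) (hkA : k ∈ A) : k ∈ B :=
  (mem_initSeg.mp (h ▸ mem_initSeg.mpr ⟨hkn, hkA⟩)).2

section primeSet

variable {e : Finset ℕ → ℕ}

lemma primeSet_inter_subset_of_mem_diff (he : Function.Injective e) {A B : Set ℕ} {k : ℕ}
    (hkA : k ∈ A) (hkB : k ∉ B) :
    primeSet e A ∩ primeSet e B ⊆ (fun n => e (initSeg A n)) '' Iic k := by
  rintro _ ⟨⟨n, rfl⟩, ⟨m, hm⟩⟩
  refine ⟨n, mem_Iic.mpr (not_lt.mp fun hkn => hkB ?_), rfl⟩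
  exact mem_of_initSeg_eq (he hm).symm hkn hkA

lemma primeSet_inter_finite (he : Function.Injective e) {A B : Set ℕ} (hAB : A ≠ B) :
    (primeSet e A ∩ primeSet e B).Finite := by
  obtain ⟨k, ⟨hkA, hkB⟩ | ⟨hkB, hkA⟩⟩ : (A \ B ∪ B \ A).Nonempty := by
    rwa [← Set.symmDiff_def, Set.symmDiff_nonempty]
  · exact ((finite_Iic k).image _).subset (primeSet_inter_subset_of_mem_diff he hkA hkB)
  · rw [inter_comm]
    exact ((finite_Iic k).image _).subset (primeSet_inter_subset_of_mem_diff he hkB hkA)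

lemma subset_of_primeSet_subset (he : Function.Injective e) {A B : Set ℕ}
    (h : primeSet e A ⊆ primeSet e B) : A ⊆ B := by
  intro k hk
  obtain ⟨m, hm⟩ := h ⟨k + 1, rfl⟩
  exact mem_of_initSeg_eq (he hm).symm k.lt_succ_self hk

lemma primeSet_injective (he : Function.Injective e) : Function.Injective (primeSet e) :=
  fun _ _ h =>
    (subset_of_primeSet_subset he h.le).antisymm (subset_of_primeSet_subset he h.ge)

lemma primeSet_infinite (he : Function.Injective e) {A : Set ℕ} (hA : A.Infinite) :
    (primeSet e A).Infinite := by
  have hinj : InjOn (fun a => e (initSeg A (a + 1))) A := by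
    intro a ha b hb hab
    have hseg := he hab
    have hab : a < b + 1 := (mem_initSeg.mp (hseg ▸ mem_initSeg.mpr ⟨a.lt_succ_self, ha⟩)).1
    have hba : b < a + 1 := (mem_initSeg.mp (hseg.symm ▸ mem_initSeg.mpr ⟨b.lt_succ_self, hb⟩)).1
    omega
  exact (hA.image hinj).mono (image_subset_iff.mpr fun a _ => ⟨a + 1, rfl⟩)

lemma pairwise_inter_finite_image_primeSet (he : Function.Injective e) (S : Set (Set ℕ)) :
    (primeSet e '' S).Pairwise fun A B => (A ∩ B).Finite := by
  rintro _ ⟨A, -, rfl⟩ _ ⟨B, -, rfl⟩ hne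
  exact primeSet_inter_finite he (ne_of_apply_ne _ hne)

end primeSet

/-- If a family `X ⊆ P(ℕ)` is closed under the (arithmetic) map `A ↦ A' = {⌜A ∩ n⌝ : n ∈ ℕ}`
(for an injective coding `e` of finite sets), then `X` contains a pairwise almost-disjoint
subfamily (an antichain of `X/Fin`) of cardinality `|X|`.  Consequently, if every antichain
of `X/Fin` (pairwise almost-disjoint family of infinite members of `X`) is countable — i.e.
`X/Fin` is c.c.c. — then `X` is countable. -/
theorem stmt0 (e : Finset ℕ → ℕ) (he : Function.Injective e)
    (X : Set (Set ℕ)) (hcl : ∀ A ∈ X, primeSet e A ∈ X) :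
    (∃ 𝒜 : Set (Set ℕ), 𝒜 ⊆ X ∧ Cardinal.mk 𝒜 = Cardinal.mk X ∧
      ∀ A ∈ 𝒜, ∀ B ∈ 𝒜, A ≠ B → (A ∩ B).Finite) ∧
    ((∀ 𝒜 : Set (Set ℕ), 𝒜 ⊆ X → (∀ A ∈ 𝒜, A.Infinite) →
        (∀ A ∈ 𝒜, ∀ B ∈ 𝒜, A ≠ B → (A ∩ B).Finite) → 𝒜.Countable) →
      X.Countable) := by
  refine ⟨⟨primeSet e '' X, image_subset_iff.mpr hcl,
    Cardinal.mk_image_eq (primeSet_injective he), pairwise_inter_finite_image_primeSet he X⟩,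
    fun hccc => Set.Countable.of_countable_setOf_infinite ?_⟩
  have hcount : (primeSet e '' {A ∈ X | A.Infinite}).Countable := by
    refine hccc _ (image_subset_iff.mpr fun A hA => hcl A hA.1) ?_
      (pairwise_inter_finite_image_primeSet he _)
    rintro _ ⟨A, hA, rfl⟩
    exact primeSet_infinite he hA.2
  exact (hcount.preimage (primeSet_injective he)).mono (subset_preimage_image _ _)
end

section
/- Suppose X is an arithmetically closed family of subsets of ℕ such that every decreasing ω-sequence in X/Fin has a lower bound in X/Fin (i.e., X/Fin is countably closed for ω-sequences). Then X = P(ℕ). -/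
/-- Terms of first-order arithmetic: variables, 0, 1, +, ×. -/
inductive ATerm : Type
  | var : ℕ → ATerm
  | zero : ATerm
  | one : ATerm
  | add : ATerm → ATerm → ATerm
  | mul : ATerm → ATerm → ATerm

def ATerm.eval (v : ℕ → ℕ) : ATerm → ℕ
  | .var i => v i
  | .zero => 0
  | .one => 1
  | .add s t => s.eval v + t.eval v
  | .mul s t => s.eval v * t.eval v

/-- Formulas of first-order arithmetic with a single set parameter `A`
(atomic formulas `s = t` and `t ∈ A`). -/
inductive AForm : Type
  | eq : ATerm → ATerm → AForm
  | mem : ATerm → AForm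
  | not : AForm → AForm
  | and : AForm → AForm → AForm
  | ex : ℕ → AForm → AForm

def AForm.Sat (A : Set ℕ) : (ℕ → ℕ) → AForm → Prop
  | v, .eq s t => s.eval v = t.eval v
  | v, .mem t => t.eval v ∈ A
  | v, .not φ => ¬ AForm.Sat A v φ
  | v, .and φ ψ => AForm.Sat A v φ ∧ AForm.Sat A v ψ
  | v, .ex i φ => ∃ m : ℕ, AForm.Sat A (Function.update v i m) φ

/-- `B` is arithmetically definable from the set parameter `A`. -/
def ArithIn (B A : Set ℕ) : Prop :=
  ∃ φ : AForm, ∀ n : ℕ, n ∈ B ↔ AForm.Sat A (Function.update (fun _ => 0) 0 n) φ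

/-! The proof codes finite patterns with Gödel's β-function. Given `S ⊆ ℕ`, the sets
`B m = {k | ∀ n < m, β k n = 0 ↔ n ∈ S}` are definable without parameters, hence in `X`; they
decrease, and they are infinite because β realises every finite sequence, with an extra last entry
making the codes distinct. A lower bound `C ∈ X` of the `B m` modulo finite sets recovers
`S = {n | β k n = 0 for all large k ∈ C}`, which is arithmetic in `C`, so `S ∈ X`. -/

namespace Nat

theorem pair_eq_iff {a b k : ℕ} :
    pair a b = k ↔ a < b ∧ b * b + a = k ∨ ¬a < b ∧ a * a + a + b = k := by
  unfold pair
  split_ifs with h <;> simp [h]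

theorem beta_eq_zero_iff {k i : ℕ} :
    beta k i = 0 ↔ ∃ a b q, pair a b = k ∧ a = q * ((i + 1) * b + 1) := by
  constructor
  · intro h
    obtain ⟨q, hq⟩ := dvd_of_mod_eq_zero h
    exact ⟨_, _, q, pair_unpair k, hq.trans (mul_comm _ _)⟩
  · rintro ⟨a, b, q, rfl, rfl⟩
    simp [beta]

theorem exists_beta_eq (f : ℕ → ℕ) (m : ℕ) : ∃ k, ∀ i < m, beta k i = f i :=
  ⟨unbeta ((List.range m).map f), fun i hi => by
    simpa using beta_unbeta_coe ((List.range m).map f) ⟨i, by simpa using hi⟩⟩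

theorem infinite_setOf_beta_eq (f : ℕ → ℕ) (m : ℕ) :
    {k | ∀ i < m, beta k i = f i}.Infinite := by
  choose k hk using fun t => exists_beta_eq (Function.update f m t) (m + 1)
  refine Set.infinite_of_injective_forall_mem (f := k) (fun s t hst => ?_) fun t i hi => ?_
  · have hs := hk s m m.lt_succ_self
    have ht := hk t m m.lt_succ_self
    simp only [hst, Function.update_self] at hs ht
    exact hs.symm.trans ht
  · simpa [hi.ne] using hk t i (by omega)

theorem infinite_setOf_beta_eq_zero_iff (S : Set ℕ) (m : ℕ) :
    {k | ∀ n < m, beta k n = 0 ↔ n ∈ S}.Infinite := by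
  classical
  refine (infinite_setOf_beta_eq (fun n => if n ∈ S then 0 else 1) m).mono fun k hk n hn => ?_
  simp [hk n hn]

end Nat

theorem eq_setOf_forall_large_of_diff_finite {R : ℕ → ℕ → Prop} {S C : Set ℕ}
    (hC : C.Infinite) (hCS : ∀ m, (C \ {k | ∀ n < m, R k n ↔ n ∈ S}).Finite) :
    S = {n | ∃ N, ∀ k ∈ C, N < k → R k n} := by
  ext n
  constructor
  · intro hn
    obtain ⟨N, hN⟩ := (hCS (n + 1)).bddAbove
    refine ⟨N, fun k hkC hNk => ?_⟩
    have hk : ∀ i < n + 1, R k i ↔ i ∈ S := by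
      by_contra hk
      exact (hN ⟨hkC, hk⟩).not_gt hNk
    exact (hk n n.lt_succ_self).2 hn
  · rintro ⟨N, hN⟩
    have hCB := hC.sdiff (hCS (n + 1))
    rw [Set.sdiff_sdiff_right_self] at hCB
    obtain ⟨k, ⟨hkC, hk⟩, hNk⟩ := hCB.exists_gt N
    exact (hk n n.lt_succ_self).1 (hN k hkC hNk)

namespace ATerm

def numeral : ℕ → ATerm
  | 0 => .zero
  | n + 1 => .add (numeral n) .one

@[simp]
theorem eval_numeral (v : ℕ → ℕ) (n : ℕ) : (numeral n).eval v = n := by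
  induction n with
  | zero => rfl
  | succ n ih => simp [numeral, eval, ih]

end ATerm

namespace AForm

def Definable (A : Set ℕ) (P : (ℕ → ℕ) → Prop) : Prop :=
  ∃ φ : AForm, ∀ v, φ.Sat A v ↔ P v

namespace Definable

variable {A : Set ℕ} {P Q : (ℕ → ℕ) → Prop}

theorem of_iff (h : Definable A P) (hPQ : ∀ v, P v ↔ Q v) : Definable A Q :=
  let ⟨φ, hφ⟩ := h
  ⟨φ, fun v => (hφ v).trans (hPQ v)⟩

theorem eq (s t : ATerm) : Definable A fun v => s.eval v = t.eval v :=
  ⟨.eq s t, fun _ => Iff.rfl⟩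

theorem mem (t : ATerm) : Definable A fun v => t.eval v ∈ A :=
  ⟨.mem t, fun _ => Iff.rfl⟩

theorem not (h : Definable A P) : Definable A fun v => ¬ P v :=
  let ⟨φ, hφ⟩ := h
  ⟨.not φ, fun v => (hφ v).not⟩

theorem and (hP : Definable A P) (hQ : Definable A Q) : Definable A fun v => P v ∧ Q v :=
  let ⟨φ, hφ⟩ := hP
  let ⟨ψ, hψ⟩ := hQ
  ⟨.and φ ψ, fun v => and_congr (hφ v) (hψ v)⟩

theorem imp (hP : Definable A P) (hQ : Definable A Q) : Definable A fun v => P v → Q v :=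
  (hP.and hQ.not).not.of_iff fun _ => not_and_not_right

theorem or (hP : Definable A P) (hQ : Definable A Q) : Definable A fun v => P v ∨ Q v :=
  (hP.not.and hQ.not).not.of_iff fun _ => by tauto

theorem exists_update (i : ℕ) (h : Definable A P) :
    Definable A fun v => ∃ m, P (Function.update v i m) :=
  let ⟨φ, hφ⟩ := h
  ⟨.ex i φ, fun _ => exists_congr fun _ => hφ _⟩

theorem forall_update (i : ℕ) (h : Definable A P) :
    Definable A fun v => ∀ m, P (Function.update v i m) :=
  (h.not.exists_update i).not.of_iff fun _ => not_exists_not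

theorem iff_const (h : Definable A P) (p : Prop) : Definable A fun v => P v ↔ p := by
  by_cases hp : p
  · exact h.of_iff fun _ => by simp [hp]
  · exact h.not.of_iff fun _ => by simp [hp]

theorem forall_lt {P : ℕ → (ℕ → ℕ) → Prop} (h : ∀ n, Definable A (P n)) (m : ℕ) :
    Definable A fun v => ∀ n < m, P n v := by
  induction m with
  | zero => exact (eq .zero .zero).of_iff fun _ => by simp
  | succ m ih => exact (ih.and (h m)).of_iff fun _ => Nat.forall_lt_succ_right.symm

end Definable

theorem _root_.ArithIn.of_definable {A B : Set ℕ} (h : Definable A fun v => v 0 ∈ B) :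
    ArithIn B A :=
  let ⟨φ, hφ⟩ := h
  ⟨φ, fun n => by simp [hφ]⟩

open ATerm

theorem definable_lt {A : Set ℕ} {i j c : ℕ} (hi : i ≠ c) (hj : j ≠ c) :
    Definable A fun v => v i < v j :=
  ((Definable.eq (var j) (add (add (var i) (var c)) one)).exists_update c).of_iff fun v => by
    simp only [eval, Function.update_self, Function.update_of_ne hi, Function.update_of_ne hj]
    exact ⟨fun ⟨_, h⟩ => by omega, fun h => ⟨v j - v i - 1, by omega⟩⟩

theorem definable_pair_eq {A : Set ℕ} {a b k c : ℕ} (ha : a ≠ c) (hb : b ≠ c) :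
    Definable A fun v => Nat.pair (v a) (v b) = v k := by
  have hlt : Definable A fun v => v a < v b := definable_lt ha hb
  refine ((hlt.and (Definable.eq (add (mul (var b) (var b)) (var a)) (var k))).or
    (hlt.not.and (Definable.eq (add (add (mul (var a) (var a)) (var a)) (var b)) (var k)))).of_iff
    fun v => ?_
  simp only [eval, Nat.pair_eq_iff]

theorem definable_beta_eq_zero {A : Set ℕ} {i j : ℕ} (hi : i < 4) (hj : j < 4) :
    Definable A fun v => Nat.beta (v j) (v i) = 0 := by
  -- the bound variables 4, 5, 6 hold `a`, `b`, `q` of `Nat.beta_eq_zero_iff`; 7 is used by `<`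
  have hpair : Definable A fun v => Nat.pair (v 4) (v 5) = v j :=
    definable_pair_eq (c := 7) (by omega) (by omega)
  have hdvd := Definable.eq (A := A) (var 4) (mul (var 6) (add (mul (add (var i) one) (var 5)) one))
  refine ((((hpair.and hdvd).exists_update 6).exists_update 5).exists_update 4).of_iff fun v => ?_
  have : i ≠ 4 ∧ i ≠ 5 ∧ i ≠ 6 ∧ j ≠ 4 ∧ j ≠ 5 ∧ j ≠ 6 := by omega
  simp [eval, Nat.beta_eq_zero_iff, this]

end AForm

open AForm ATerm

theorem arithIn_setOf_beta_pattern (A S : Set ℕ) (m : ℕ) :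
    ArithIn {k | ∀ n < m, Nat.beta k n = 0 ↔ n ∈ S} A := by
  have hbeta (n : ℕ) : Definable A fun v => Nat.beta (v 0) n = 0 :=
    (((Definable.eq (var 1) (numeral n)).and (definable_beta_eq_zero (i := 1) (j := 0)
      (by omega) (by omega))).exists_update 1).of_iff fun v => by simp [eval]
  exact .of_definable <| .forall_lt (fun n => (hbeta n).iff_const (n ∈ S)) m

theorem arithIn_setOf_eventually_beta_eq_zero (C : Set ℕ) :
    ArithIn {n | ∃ N, ∀ k ∈ C, N < k → Nat.beta k n = 0} C := by
  have hlt : Definable C fun v => v 2 < v 1 := definable_lt (c := 3) (by omega) (by omega)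
  have hbeta : Definable C fun v => Nat.beta (v 1) (v 0) = 0 :=
    definable_beta_eq_zero (by omega) (by omega)
  have hlarge := (((Definable.mem (var 1)).imp (hlt.imp hbeta)).forall_update 1).exists_update 2
  exact .of_definable <| hlarge.of_iff fun v => by simp [eval]

/-- If `X` is a (nonempty) arithmetically closed family of subsets of `ℕ` such that every
`⊆_Fin`-decreasing ω-sequence in `X/Fin` (the infinite members of `X` under almost
inclusion) has a lower bound in `X/Fin`, then `X = P(ℕ)`. -/
theorem stmt3 (X : Set (Set ℕ)) (hne : X.Nonempty)
    (hac : ∀ A ∈ X, ∀ B : Set ℕ, ArithIn B A → B ∈ X)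
    (hcc : ∀ B : ℕ → Set ℕ, (∀ n, B n ∈ X) → (∀ n, (B n).Infinite) →
      (∀ n, (B (n + 1) \ B n).Finite) →
      ∃ C ∈ X, C.Infinite ∧ ∀ n, (C \ B n).Finite) :
    X = Set.univ := by
  obtain ⟨A₀, hA₀⟩ := hne
  refine Set.eq_univ_of_forall fun S => ?_
  let B : ℕ → Set ℕ := fun m => {k | ∀ n < m, Nat.beta k n = 0 ↔ n ∈ S}
  have hB_anti (m : ℕ) : B (m + 1) ⊆ B m := fun k hk n hn => hk n (by omega)
  obtain ⟨C, hCX, hC, hCB⟩ := hcc B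
    (fun m => hac A₀ hA₀ _ (arithIn_setOf_beta_pattern A₀ S m))
    (Nat.infinite_setOf_beta_eq_zero_iff S)
    fun m => Set.sdiff_eq_empty.2 (hB_anti m) ▸ Set.finite_empty
  rw [eq_setOf_forall_large_of_diff_finite hC hCB]
  exact hac C hCX _ (arithIn_setOf_eventually_beta_eq_zero C)
end

section
/- Given A ⊆ ℕ, define B_n = {m ∈ ℕ : (m)_n = χ_A(n)} where (m)_n is the n-th binary digit of m and χ_A is the characteristic function of A. Then each finite intersection A_m = ⋂_{n≤m} B_n is infinite, and for any infinite C ⊆ ℕ with C ⊆_Fin B_n for all n, one has A = {n ∈ ℕ : ∃m ∀k ∈ C, k > m → (k)_n = 1}. -/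
/-!
Prescribing the bits below `m + 1` fixes a residue modulo `2 ^ (m + 1)`, which has infinitely many
representatives. For the second part, let `F` be the filter `atTop ⊓ 𝓟 C`, proper because `C` is
infinite. `C ⊆_Fin B_n` says that `(k)_n = 1 ↔ n ∈ A` holds `F`-eventually, and
`∃ m, ∀ k ∈ C, k > m → (k)_n = 1` says that `(k)_n = 1` holds `F`-eventually; over a proper
filter, an eventual equivalence with a constant proposition decides whether the other side holds
eventually.
-/

open Filter

theorem Nat.exists_lt_two_pow_testBit_eq (p : ℕ → Bool) (N : ℕ) :
    ∃ b < 2 ^ N, ∀ n < N, b.testBit n = p n := by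
  induction N generalizing p with
  | zero => exact ⟨0, by simp, by simp⟩
  | succ N ih =>
    obtain ⟨b, hb, hbits⟩ := ih (p ∘ Nat.succ)
    refine ⟨Nat.bit (p 0) b, Nat.bit_lt_two_pow_succ_iff.2 hb, ?_⟩
    rintro (_ | n) hn
    · exact Nat.testBit_bit_zero _ _
    · rw [Nat.testBit_bit_succ]
      exact hbits n (by omega)

theorem Nat.infinite_setOf_testBit_eq (p : ℕ → Bool) (N : ℕ) :
    {k : ℕ | ∀ n < N, k.testBit n = p n}.Infinite := by
  obtain ⟨b, hb, hbits⟩ := Nat.exists_lt_two_pow_testBit_eq p N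
  refine Set.infinite_of_injective_forall_mem (f := fun a => 2 ^ N * a + b) ?_ fun a n hn => ?_
  · intro a a' h
    exact Nat.eq_of_mul_eq_mul_left (by positivity) (Nat.add_right_cancel h)
  · rw [Nat.testBit_two_pow_mul_add a hb, if_pos hn, hbits n hn]

theorem Nat.eventually_atTop_inf_principal_mem_iff {C S : Set ℕ} :
    (∀ᶠ k in atTop ⊓ 𝓟 C, k ∈ S) ↔ (C \ S).Finite := by
  rw [← Nat.cofinite_eq_atTop, eventually_inf_principal, eventually_cofinite]
  simp only [Classical.not_imp]
  rfl

theorem Nat.eventually_atTop_inf_principal_iff {C : Set ℕ} {q : ℕ → Prop} :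
    (∀ᶠ k in atTop ⊓ 𝓟 C, q k) ↔ ∃ m : ℕ, ∀ k ∈ C, k > m → q k := by
  rw [(atTop_basis_Ioi.inf_principal C).eventually_iff]
  simp only [true_and, Set.mem_inter_iff, Set.mem_Ioi, and_imp]
  exact exists_congr fun m => forall_congr' fun _ => Imp.swap

/-- Given `A ⊆ ℕ`, let `B_n = {m : (m)_n = χ_A(n)}`, where `(m)_n` is the `n`-th binary
digit of `m` (so `(m)_n = χ_A(n)` iff `m.testBit n = true ↔ n ∈ A`).  Then every finite
intersection `A_m = ⋂_{n ≤ m} B_n` is infinite, and if `C` is infinite with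
`C ⊆_Fin B_n` for all `n`, then `A = {n : ∃ m, ∀ k ∈ C, k > m → (k)_n = 1}`. -/
theorem stmt4 (A : Set ℕ) :
    (∀ m : ℕ, {k : ℕ | ∀ n ≤ m, (k.testBit n = true ↔ n ∈ A)}.Infinite) ∧
    ∀ C : Set ℕ, C.Infinite →
      (∀ n : ℕ, (C \ {m : ℕ | m.testBit n = true ↔ n ∈ A}).Finite) →
      A = {n : ℕ | ∃ m : ℕ, ∀ k ∈ C, k > m → k.testBit n = true} := by
  classical
  refine ⟨fun m => ?_, fun C hC hfin => ?_⟩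
  · refine (Nat.infinite_setOf_testBit_eq (fun n => decide (n ∈ A)) (m + 1)).mono
      fun k hk n hn => ?_
    rw [hk n (Nat.lt_add_one_iff.2 hn)]
    exact decide_eq_true_iff
  · have : (atTop ⊓ 𝓟 C).NeBot :=
      frequently_mem_iff_neBot.1 (Nat.frequently_atTop_iff_infinite.2 hC)
    ext n
    have hbit : ∀ᶠ k in atTop ⊓ 𝓟 C, (k.testBit n = true ↔ n ∈ A) :=
      Nat.eventually_atTop_inf_principal_mem_iff.2 (hfin n)
    rw [Set.mem_ofPred_eq, ← Nat.eventually_atTop_inf_principal_iff,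
      eventually_congr hbit, eventually_const]
end
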